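/- arXiv:2601.04173 — 2 statements merged into one kernel-verified Lean document; each statement's English description precedes it below -/
import Mathlib

section
/- Let n ∈ ℝ³ be a unit vector, v ∈ ℝ³, and set A = v ⊗ n. Then 4 |e(A)·n|² = ‖A‖_F² + 3 (tr A)², where e(A) = (1/2)(A + Aᵀ) and |e(A)·n|² = Σ_i (Σ_j e(A)_{ij} n_j)². -/
/-!
For `A = v ⊗ n` one has `A n = (n ⬝ᵥ n) v` and `Aᵀ n = (v ⬝ᵥ n) n`, so for a unit vector `n`,
`2 e(A) n = v + (v ⬝ᵥ n) n`, whose squared length is `|v|² + 3 (v ⬝ᵥ n)²`.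
On the other side, `‖A‖_F² = |v|² |n|² = |v|²` and `tr A = v ⬝ᵥ n`.
-/

open Matrix BigOperators

namespace Matrix

variable {ι : Type*} [Fintype ι]

theorem sum_sq_eq_dotProduct_self (x : ι → ℝ) : ∑ i, x i ^ 2 = x ⬝ᵥ x := by
  simp only [dotProduct, sq]

theorem sum_sq_vecMulVec_apply (v n : ι → ℝ) :
    ∑ i, ∑ j, vecMulVec v n i j ^ 2 = (v ⬝ᵥ v) * (n ⬝ᵥ n) := by
  simp only [vecMulVec_apply, mul_pow, ← Finset.sum_mul_sum, sum_sq_eq_dotProduct_self]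

theorem two_smul_symmPart_vecMulVec_mulVec (v n : ι → ℝ) :
    (2 : ℝ) • (((1 / 2 : ℝ) • (vecMulVec v n + (vecMulVec v n)ᵀ)) *ᵥ n)
      = (n ⬝ᵥ n) • v + (v ⬝ᵥ n) • n := by
  rw [smul_mulVec, smul_smul, transpose_vecMulVec, add_mulVec, vecMulVec_mulVec,
    vecMulVec_mulVec, op_smul_eq_smul, op_smul_eq_smul]
  norm_num

theorem dotProduct_self_add_dotProduct_smul {v n : ι → ℝ} (hn : n ⬝ᵥ n = 1) :
    (v + (v ⬝ᵥ n) • n) ⬝ᵥ (v + (v ⬝ᵥ n) • n) = v ⬝ᵥ v + 3 * (v ⬝ᵥ n) ^ 2 := by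
  simp only [add_dotProduct, dotProduct_add, smul_dotProduct, dotProduct_smul, smul_eq_mul,
    hn, dotProduct_comm n v]
  ring

end Matrix

/-- If A = v ⊗ n with n a unit vector, then 4|e(A)·n|² = ‖A‖_F² + 3(tr A)². -/
theorem symmetric_part_normal (n v : Fin 3 → ℝ)
    (hn : ∑ i : Fin 3, n i ^ 2 = 1)
    (A : Matrix (Fin 3) (Fin 3) ℝ) (hA : A = vecMulVec v n) :
    4 * ∑ i : Fin 3, (((1 / 2 : ℝ) • (A + Aᵀ)).mulVec n i) ^ 2
      = (∑ i : Fin 3, ∑ j : Fin 3, (A i j) ^ 2) + 3 * A.trace ^ 2 := by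
  subst hA
  rw [sum_sq_eq_dotProduct_self] at hn
  set w := ((1 / 2 : ℝ) • (vecMulVec v n + (vecMulVec v n)ᵀ)) *ᵥ n with hw
  have h2w : (2 : ℝ) • w = v + (v ⬝ᵥ n) • n := by
    rw [hw, two_smul_symmPart_vecMulVec_mulVec, hn, one_smul]
  calc 4 * ∑ i, w i ^ 2 = ((2 : ℝ) • w) ⬝ᵥ ((2 : ℝ) • w) := by
        rw [sum_sq_eq_dotProduct_self, smul_dotProduct, dotProduct_smul]; norm_num; ring
    _ = v ⬝ᵥ v + 3 * (v ⬝ᵥ n) ^ 2 := by rw [h2w, dotProduct_self_add_dotProduct_smul hn]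
    _ = _ := by rw [sum_sq_vecMulVec_apply, trace_vecMulVec, hn, mul_one]
end

section
/- Let μ, λ ∈ ℝ, let n ∈ ℝ³ be a unit vector, v ∈ ℝ³, and set A = v ⊗ n. Define the stress matrix P := 2μ e(A) + λ (tr A) I, where e(A) = (1/2)(A + Aᵀ). Then |P·n|² = μ² ( ‖A‖_F² + 3 (tr A)² ) + 4 μ λ (tr A)² + λ² (tr A)². -/
open Matrix BigOperators

/-!
For `A = v ⊗ n` with `|n| = 1` we have `A n = v` and `Aᵀ n = (v · n) n = (tr A) n`, so the
traction is `P n = μ v + (μ + λ)(tr A) n`. Expanding its square norm gives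
`μ² |v|² + (3μ² + 4μλ + λ²)(tr A)²`, and `‖A‖_F² = |v|² |n|² = |v|²`.
-/

section RankOne

variable {ι : Type*} [Fintype ι]

theorem sum_sum_vecMulVec_sq {R : Type*} [CommSemiring R] (v n : ι → R) :
    ∑ i, ∑ j, vecMulVec v n i j ^ 2 = (∑ i, v i ^ 2) * ∑ j, n j ^ 2 := by
  simp only [vecMulVec_apply, mul_pow, Finset.sum_mul_sum]

theorem sum_sq_smul_add_smul {R : Type*} [CommRing R] (a b : R) (v n : ι → R) :
    ∑ i, ((a • v + b • n) i) ^ 2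
      = a ^ 2 * ∑ i, v i ^ 2 + 2 * a * b * (v ⬝ᵥ n) + b ^ 2 * ∑ i, n i ^ 2 := by
  simp only [Pi.add_apply, Pi.smul_apply, smul_eq_mul, dotProduct, Finset.mul_sum,
    ← Finset.sum_add_distrib]
  exact Finset.sum_congr rfl fun _ _ => by ring

variable [DecidableEq ι]

noncomputable def stress (μ lam : ℝ) (A : Matrix ι ι ℝ) : Matrix ι ι ℝ :=
  (2 * μ) • ((1 / 2 : ℝ) • (A + Aᵀ)) + (lam * A.trace) • (1 : Matrix ι ι ℝ)

theorem stress_vecMulVec_mulVec (μ lam : ℝ) (v n : ι → ℝ) (hn : n ⬝ᵥ n = 1) :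
    stress μ lam (vecMulVec v n) *ᵥ n = μ • v + ((μ + lam) * (v ⬝ᵥ n)) • n := by
  have hsym : (2 * μ) • ((1 / 2 : ℝ) • (vecMulVec v n + (vecMulVec v n)ᵀ))
      = μ • (vecMulVec v n + vecMulVec n v) := by
    rw [smul_smul, transpose_vecMulVec, show 2 * μ * (1 / 2) = μ by ring]
  rw [stress, hsym, add_mulVec, smul_mulVec, add_mulVec, vecMulVec_mulVec, vecMulVec_mulVec,
    smul_mulVec, one_mulVec, trace_vecMulVec, hn]
  simp only [op_smul_eq_smul, one_smul, smul_add, smul_smul]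
  module

end RankOne

/-- If A = v ⊗ n with n a unit vector and P = 2μ e(A) + λ (tr A) I, then
    |P·n|² = μ²(‖A‖_F² + 3(tr A)²) + 4μλ(tr A)² + λ²(tr A)². -/
theorem stress_vector_norm_sq (μ lam : ℝ) (n v : Fin 3 → ℝ)
    (hn : ∑ i : Fin 3, n i ^ 2 = 1)
    (A : Matrix (Fin 3) (Fin 3) ℝ) (hA : A = vecMulVec v n)
    (P : Matrix (Fin 3) (Fin 3) ℝ)
    (hP : P = (2 * μ) • ((1 / 2 : ℝ) • (A + Aᵀ)) + (lam * A.trace) • (1 : Matrix (Fin 3) (Fin 3) ℝ)) :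
    ∑ i : Fin 3, (P.mulVec n i) ^ 2
      = μ ^ 2 * ((∑ i : Fin 3, ∑ j : Fin 3, (A i j) ^ 2) + 3 * A.trace ^ 2)
        + 4 * μ * lam * A.trace ^ 2 + lam ^ 2 * A.trace ^ 2 := by
  have hP' : P = stress μ lam A := hP
  have hnn : n ⬝ᵥ n = 1 := by simpa only [dotProduct, sq] using hn
  subst hA hP'
  rw [stress_vecMulVec_mulVec μ lam v n hnn, sum_sq_smul_add_smul, sum_sum_vecMulVec_sq,
    trace_vecMulVec, hn]
  ring
end
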